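/- arXiv:1505.05637 — 5 statements merged into one kernel-verified Lean document; each statement's English description precedes it below -/
import Mathlib

section
/- Let G be a finite simple graph, B a corruption instance, r a report consistent with B, and let H' be the subgraph of G induced on the truthful set T = V \ B. Then every connected component of H' is also a connected component of the agreement graph H = H(r): for every truthful vertex u ∉ B, the set of vertices reachable from u in H' equals the set of vertices reachable from u in H. -/
/-! A truthful vertex accepts exactly its truthful neighbours. Hence every edge of `G` between
truthful vertices is an agreement edge, and every agreement edge leaving a truthful vertex ends
at a truthful vertex, so agreement walks from a truthful vertex never leave the truthful set. -/

open scoped Classical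

/-- A report `r` is consistent with corruption instance `B` if every truthful vertex
(`u ∉ B`) reports the true type of each of its neighbors. -/
def Consistent {V : Type*} (G : SimpleGraph V) (r : V × V → Bool) (B : Finset V) : Prop :=
  ∀ u ∉ B, ∀ v, G.Adj u v → (r (u, v) = true ↔ v ∉ B)

/-- The agreement graph `H(r)`: `u, v` adjacent iff adjacent in `G` and both report
each other truthful. -/
def agreementGraph {V : Type*} (G : SimpleGraph V) (r : V × V → Bool) : SimpleGraph V where
  Adj u v := G.Adj u v ∧ r (u, v) = true ∧ r (v, u) = true
  symm := by
    constructor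
    rintro u v ⟨h1, h2, h3⟩
    exact ⟨h1.symm, h3, h2⟩
  loopless := by
    constructor
    rintro u ⟨h1, -, -⟩
    exact G.loopless.irrefl u h1

/-- `G` is a δ-good expander: (i) every set `U` with `|U| ≤ 2δn` has more than `|U|`
neighbors outside `U`; (ii) any two disjoint sets of sizes `≥ δn` and `≥ n/4` are
joined by an edge. -/
def GoodExpander {V : Type*} [Fintype V] (G : SimpleGraph V) (δ : ℝ) : Prop :=
  (∀ U : Finset V, (U.card : ℝ) ≤ 2 * δ * (Fintype.card V : ℝ) →
      U.card < (Finset.univ.filter (fun v => v ∉ U ∧ ∃ u ∈ U, G.Adj u v)).card) ∧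
  (∀ A₁ A₂ : Finset V, Disjoint A₁ A₂ →
      δ * (Fintype.card V : ℝ) ≤ (A₁.card : ℝ) →
      (Fintype.card V : ℝ) / 4 ≤ (A₂.card : ℝ) →
      ∃ a ∈ A₁, ∃ b ∈ A₂, G.Adj a b)

/-- The subgraph of `G` induced on a set `T` (kept as a graph on the same vertex set). -/
def inducedOn {V : Type*} (G : SimpleGraph V) (T : Set V) : SimpleGraph V where
  Adj u v := G.Adj u v ∧ u ∈ T ∧ v ∈ T
  symm := by
    constructor
    rintro u v ⟨h1, h2, h3⟩
    exact ⟨h1.symm, h3, h2⟩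
  loopless := by
    constructor
    rintro u ⟨h1, -, -⟩
    exact G.loopless.irrefl u h1

namespace SimpleGraph

theorem Reachable.mono_of_invariant {V : Type*} {G₁ G₂ : SimpleGraph V} {S : Set V}
    (hS : ∀ a b, a ∈ S → G₂.Adj a b → G₁.Adj a b ∧ b ∈ S) {u v : V} (h : G₂.Reachable u v)
    (hu : u ∈ S) : G₁.Reachable u v := by
  obtain ⟨p⟩ := h
  induction p with
  | nil => rfl
  | cons hab _ ih =>
    obtain ⟨hab₁, hb⟩ := hS _ _ hu hab
    exact hab₁.reachable.trans (ih hb)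

end SimpleGraph

namespace Consistent

variable {V : Type*} {G : SimpleGraph V} {r : V × V → Bool} {B : Finset V}

theorem inducedOn_le_agreementGraph (hcons : Consistent G r B) :
    inducedOn G {x | x ∉ B} ≤ agreementGraph G r := fun a b ⟨hab, ha, hb⟩ =>
  ⟨hab, (hcons a ha b hab).mpr hb, (hcons b hb a hab.symm).mpr ha⟩

theorem inducedOn_adj_of_agreementGraph_adj (hcons : Consistent G r B) {u v : V} (hu : u ∉ B)
    (h : (agreementGraph G r).Adj u v) : (inducedOn G {x | x ∉ B}).Adj u v ∧ v ∉ B :=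
  have hv : v ∉ B := (hcons u hu v h.1).mp h.2.1
  ⟨⟨h.1, hu, hv⟩, hv⟩

end Consistent

theorem truthful_component_eq_agreement_component_general {V : Type*}
    (G : SimpleGraph V) (r : V × V → Bool) (B : Finset V)
    (hcons : Consistent G r B) (u : V) (hu : u ∉ B) :
    {v | (inducedOn G {x | x ∉ B}).Reachable u v} =
      {v | (agreementGraph G r).Reachable u v} := by
  ext v
  exact ⟨fun h => h.mono hcons.inducedOn_le_agreementGraph,
    fun h => h.mono_of_invariant (fun _ _ => hcons.inducedOn_adj_of_agreementGraph_adj) hu⟩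

/-- Every connected component of the subgraph `H'` of `G` induced on the
truthful set is also a connected component of the agreement graph `H(r)`. -/
theorem truthful_component_eq_agreement_component {V : Type*} [Fintype V]
    (G : SimpleGraph V) (r : V × V → Bool) (B : Finset V)
    (hcons : Consistent G r B) (u : V) (hu : u ∉ B) :
    {v | (inducedOn G {x | x ∉ B}).Reachable u v} =
      {v | (agreementGraph G r).Reachable u v} :=
  truthful_component_eq_agreement_component_general G r B hcons u hu
end

section
/- Let G be a finite simple graph on n vertices and let ε > 0. Suppose there exists a set B' ⊆ V with |B'| ≤ εn such that every connected component of the subgraph of G induced on V \ B' has at most εn vertices. Then there exists a single report r : V × V → Bool such that for every vertex v ∈ V there is a corruption instance B_v ⊆ V with v ∈ B_v, |B_v| ≤ 2εn, and r consistent with B_v. Consequently, even knowing that the truthful set has size at least (1 − 2ε)n, no deterministic algorithm can identify from the reports even a single vertex that is guaranteed to be truthful. -/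
/-!
Let every vertex report exactly the vertices outside `B'` as truthful. This report is
consistent with `B'` itself, and with `B' ∪ C` for every component `C` of `G - B'`: a truthful
vertex outside `B' ∪ C` has no neighbour in `C`, since such a neighbour would pull it into `C`.
So every vertex `v` lies in a consistent corruption instance of size at most
`|B'| + |C_v| ≤ 2εn`.
-/

open scoped Classical

namespace SimpleGraph

variable {V : Type*} (G : SimpleGraph V)

noncomputable def reportOutside (S : Finset V) : V × V → Bool := fun p => decide (p.2 ∉ S)

theorem consistent_reportOutside {S B : Finset V} (hSB : S ⊆ B)
    (hclosed : ∀ u w, G.Adj u w → u ∉ B → w ∉ S → w ∉ B) :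
    Consistent G (reportOutside S) B := by
  intro u hu w hadj
  simp only [reportOutside, decide_eq_true_eq]
  exact ⟨hclosed u w hadj hu, fun hwB hwS => hwB (hSB hwS)⟩

theorem consistent_reportOutside_self (S : Finset V) :
    Consistent G (reportOutside S) S :=
  G.consistent_reportOutside subset_rfl fun _ _ _ _ hw => hw

theorem consistent_reportOutside_union_component [Fintype V] (S : Finset V) (v : V) :
    Consistent G (reportOutside S)
      (S ∪ {x | (inducedOn G {x | x ∉ S}).Reachable v x}.toFinset) := by
  refine G.consistent_reportOutside Finset.subset_union_left fun u w hadj hu hwS hw => hu ?_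
  simp only [Finset.mem_union, Set.mem_toFinset, Set.mem_ofPred_eq] at hu hw ⊢
  have huS : u ∉ S := fun h => hu (Or.inl h)
  have hwu : (inducedOn G {x | x ∉ S}).Adj w u := ⟨hadj.symm, hwS, huS⟩
  exact Or.inr ((hw.resolve_left hwS).trans hwu.reachable)

end SimpleGraph

open SimpleGraph in
theorem no_detection_without_expansion_general {V : Type*} [Fintype V]
    (G : SimpleGraph V) (ε : ℝ)
    (B' : Finset V) (hB' : (B'.card : ℝ) ≤ ε * (Fintype.card V : ℝ))
    (hcomp : ∀ u : V, u ∉ B' →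
      (({v | (inducedOn G {x | x ∉ B'}).Reachable u v}.ncard : ℕ) : ℝ) ≤
        ε * (Fintype.card V : ℝ)) :
    ∃ r : V × V → Bool, ∀ v : V, ∃ B : Finset V,
      v ∈ B ∧ (B.card : ℝ) ≤ 2 * ε * (Fintype.card V : ℝ) ∧ Consistent G r B := by
  refine ⟨reportOutside B', fun v => ?_⟩
  by_cases hv : v ∈ B'
  · have : (0 : ℝ) ≤ B'.card := Nat.cast_nonneg _
    exact ⟨B', hv, by linarith, G.consistent_reportOutside_self B'⟩
  · set C := {x | (inducedOn G {x | x ∉ B'}).Reachable v x}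
    have hvC : v ∈ C.toFinset := Set.mem_toFinset.2 (Reachable.refl v)
    have hcard : ((B' ∪ C.toFinset).card : ℝ) ≤ B'.card + C.ncard := by
      rw [Set.ncard_eq_toFinset_card']
      exact_mod_cast Finset.card_union_le _ _
    exact ⟨B' ∪ C.toFinset, Finset.mem_union_right _ hvC, by linarith [hcomp v hv],
      G.consistent_reportOutside_union_component B' v⟩

/-- If `G` can be split, by removing a set `B'` of at most `εn`
vertices, into connected components each of size at most `εn`, then there is a single
report `r` such that every vertex is corrupt in some corruption instance of size at most
`2εn` consistent with `r`; hence no truthful vertex can be identified. -/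
theorem no_detection_without_expansion {V : Type*} [Fintype V]
    (G : SimpleGraph V) (ε : ℝ) (hε : 0 < ε)
    (B' : Finset V) (hB' : (B'.card : ℝ) ≤ ε * (Fintype.card V : ℝ))
    (hcomp : ∀ u : V, u ∉ B' →
      (({v | (inducedOn G {x | x ∉ B'}).Reachable u v}.ncard : ℕ) : ℝ) ≤
        ε * (Fintype.card V : ℝ)) :
    ∃ r : V × V → Bool, ∀ v : V, ∃ B : Finset V,
      v ∈ B ∧ (B.card : ℝ) ≤ 2 * ε * (Fintype.card V : ℝ) ∧ Consistent G r B :=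
  no_detection_without_expansion_general G ε B' hB' hcomp
end

section
/- Let D be a finite directed graph, B a corruption instance, and r a report consistent with B. Let H = H(r) be the directed agreement graph. If u and v lie in the same strongly connected component of H (i.e., each is reachable from the other by a directed path in H), then u ∈ B if and only if v ∈ B. That is, every strongly connected component of H is either entirely truthful or entirely corrupt. -/
open scoped Classical

/-- A report `r` is consistent with corruption instance `B` if every truthful vertex
(`u ∉ B`) reports the true type of each of its out-neighbors. -/
def DirConsistent {V : Type*} (E : V → V → Prop) (r : V × V → Bool) (B : Finset V) : Prop :=
  ∀ u ∉ B, ∀ v, E u v → (r (u, v) = true ↔ v ∉ B)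

/-- The directed agreement graph `H(r)`: directed edges of `D` along which the report
is "truthful". -/
def dirAgree {V : Type*} (E : V → V → Prop) (r : V × V → Bool) : V → V → Prop :=
  fun u v => E u v ∧ r (u, v) = true

/-- The directed subgraph induced on a set `T`. -/
def dirInduced {V : Type*} (E : V → V → Prop) (T : Set V) : V → V → Prop :=
  fun u v => E u v ∧ u ∈ T ∧ v ∈ T

/-- `u` and `v` are in the same strongly connected component of the directed graph with
edge relation `E`: each is reachable from the other by a directed path. -/
def SameSCC {V : Type*} (E : V → V → Prop) (u v : V) : Prop :=
  Relation.ReflTransGen E u v ∧ Relation.ReflTransGen E v u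

/-- `D` is a δ-good directed expander: (i) every set `U` with `|U| ≤ 4δn` has more than
`|U|` out-neighbors outside `U`; (ii) between any two disjoint sets of sizes `≥ δn` and
`≥ n/4` there are directed edges in both directions. -/
def GoodDirExpander {V : Type*} [Fintype V] (E : V → V → Prop) (δ : ℝ) : Prop :=
  (∀ U : Finset V, (U.card : ℝ) ≤ 4 * δ * (Fintype.card V : ℝ) →
      U.card < (Finset.univ.filter (fun v => v ∉ U ∧ ∃ u ∈ U, E u v)).card) ∧
  (∀ A₁ A₂ : Finset V, Disjoint A₁ A₂ →
      δ * (Fintype.card V : ℝ) ≤ (A₁.card : ℝ) →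
      (Fintype.card V : ℝ) / 4 ≤ (A₂.card : ℝ) →
      (∃ a ∈ A₁, ∃ b ∈ A₂, E a b) ∧ (∃ b ∈ A₂, ∃ a ∈ A₁, E b a))

lemma notB_closed {V : Type*} (E : V → V → Prop) (r : V × V → Bool) (B : Finset V)
    (hcons : DirConsistent E r B) {u v : V}
    (h : Relation.ReflTransGen (dirAgree E r) u v) (hu : u ∉ B) : v ∉ B := by
  induction h with
  | refl => exact hu
  | tail _ hstep ih => exact ((hcons _ ih _ hstep.1).mp hstep.2)

/-- Every strongly connected component of the directed agreement graph
`H(r)` is either entirely truthful or entirely corrupt. -/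
theorem scc_same_type {V : Type*} [Fintype V]
    (E : V → V → Prop) (r : V × V → Bool) (B : Finset V)
    (hcons : DirConsistent E r B) (u v : V)
    (h : SameSCC (dirAgree E r) u v) :
    u ∈ B ↔ v ∈ B := by
  constructor
  · intro hu
    by_contra hv
    exact (notB_closed E r B hcons h.2 hv) hu
  · intro hv
    by_contra hu
    exact (notB_closed E r B hcons h.1 hu) hv
end

section
/- Let D be a finite directed graph, B a corruption instance, r a report consistent with B, and let H' be the directed subgraph of D induced on the truthful set T = V \ B. Then every strongly connected component of H' is also a strongly connected component of the directed agreement graph H = H(r): for every truthful vertex u ∉ B, the SCC of u in H' equals the SCC of u in H. -/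
open scoped Classical

/-- Every strongly connected component of the subgraph of `D` induced
on the truthful set is also a strongly connected component of the directed agreement
graph `H(r)`. -/
theorem truthful_scc_eq_agreement_scc {V : Type*} [Fintype V]
    (E : V → V → Prop) (r : V × V → Bool) (B : Finset V)
    (hcons : DirConsistent E r B) (u : V) (hu : u ∉ B) :
    {v | SameSCC (dirInduced E {x | x ∉ B}) u v} =
      {v | SameSCC (dirAgree E r) u v} := by
  have key : ∀ v : V, v ∉ B → ∀ w,
      Relation.ReflTransGen (dirAgree E r) v w →
      w ∉ B ∧ Relation.ReflTransGen (dirInduced E {x | x ∉ B}) v w := by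
    intro v hv w h
    induction h with
    | refl => exact ⟨hv, Relation.ReflTransGen.refl⟩
    | tail _ hbc ih =>
      obtain ⟨hb, hpath⟩ := ih
      obtain ⟨hE, hr⟩ := hbc
      have hc : _ ∉ B := (hcons _ hb _ hE).1 hr
      exact ⟨hc, hpath.tail ⟨hE, hb, hc⟩⟩
  have fwd : ∀ a b : V, Relation.ReflTransGen (dirInduced E {x | x ∉ B}) a b →
      Relation.ReflTransGen (dirAgree E r) a b := by
    intro a b h
    induction h with
    | refl => exact Relation.ReflTransGen.refl
    | tail _ hbc ih =>
      obtain ⟨hE, hb, hc⟩ := hbc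
      exact ih.tail ⟨hE, (hcons _ hb _ hE).2 hc⟩
  ext v
  simp only [Set.mem_setOf_eq, SameSCC]
  constructor
  · rintro ⟨h1, h2⟩
    exact ⟨fwd _ _ h1, fwd _ _ h2⟩
  · rintro ⟨h1, h2⟩
    obtain ⟨hv, p1⟩ := key u hu v h1
    exact ⟨p1, (key v hv u h2).2⟩
end

section
/- Let 0 < ε < 1/3 and let G be an ε-connected finite simple graph on n vertices. Let B be a corruption instance with |V \ B| ≥ (1 − ε)n and let r be a report consistent with B. Let T' be the union of all connected components of the agreement graph H = H(r) that have at least εn vertices. Then |(V \ B) \ T'| < εn; that is, all but fewer than εn of the truthful vertices lie in connected components of H of size at least εn, and hence one can identify a subset of the truthful vertices of size greater than |V \ B| − εn ≥ (1 − 2ε)n. -/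
/-! Suppose at least `εn` truthful vertices lie in components of the agreement graph `H` with
fewer than `εn` vertices. Truthful vertices reach only truthful vertices in `H`, so these
vertices form a union of components, each smaller than `εn`; greedily discarding components
leaves a union `Y` of components with `εn ≤ |Y| < 2εn`. The truthful vertices outside `Y` number
more than `(1 - ε)n - 2εn = (1 - 3ε)n`, so `ε`-connectivity gives a `G`-edge between two truthful
vertices, one in `Y` and one outside. Two truthful neighbours always agree, so this is an edge
of `H` leaving a union of components, which is absurd. -/

open scoped Classical

/-- `G` is δ-connected: any two disjoint sets of sizes `≥ δn` and `≥ (1-3δ)n` are joined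
by an edge of `G`. -/
def DeltaConnected {V : Type*} [Fintype V] (G : SimpleGraph V) (δ : ℝ) : Prop :=
  ∀ A₁ A₂ : Finset V, Disjoint A₁ A₂ →
    δ * (Fintype.card V : ℝ) ≤ (A₁.card : ℝ) →
    (1 - 3 * δ) * (Fintype.card V : ℝ) ≤ (A₂.card : ℝ) →
    ∃ a ∈ A₁, ∃ b ∈ A₂, G.Adj a b

section

variable {V : Type*}

namespace SimpleGraph

def IsReachClosed (H : SimpleGraph V) (X : Set V) : Prop :=
  ∀ ⦃v w⦄, H.Reachable v w → v ∈ X → w ∈ X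

lemma IsReachClosed.setOf_reachable_subset {H : SimpleGraph V} {X : Set V}
    (hX : H.IsReachClosed X) {v : V} (hv : v ∈ X) : {w | H.Reachable v w} ⊆ X :=
  fun _ hw => hX hw hv

lemma IsReachClosed.sdiff_setOf_reachable {H : SimpleGraph V} {X : Set V}
    (hX : H.IsReachClosed X) (v : V) : H.IsReachClosed (X \ {w | H.Reachable v w}) :=
  fun _ _ huw ⟨huX, hvu⟩ => ⟨hX huw huX, fun hvw => hvu (hvw.trans huw.symm)⟩

lemma Reachable.setOf_reachable_eq {H : SimpleGraph V} {v w : V} (hvw : H.Reachable v w) :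
    {x | H.Reachable v x} = {x | H.Reachable w x} :=
  Set.ext fun _ => ⟨hvw.symm.trans, hvw.trans⟩

theorem IsReachClosed.exists_subset_ncard_mem_Ico [Finite V] {H : SimpleGraph V} {k : ℝ}
    (hk : 0 < k) {X : Set V} (hX : H.IsReachClosed X)
    (hsmall : ∀ v ∈ X, ({w | H.Reachable v w}.ncard : ℝ) < k) (hkX : k ≤ X.ncard) :
    ∃ Y ⊆ X, H.IsReachClosed Y ∧ k ≤ Y.ncard ∧ (Y.ncard : ℝ) < 2 * k := by
  induction hm : X.ncard using Nat.strong_induction_on generalizing X with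
  | _ m ih =>
  by_cases hX2 : (X.ncard : ℝ) < 2 * k
  · exact ⟨X, subset_rfl, hX, hkX, hX2⟩
  obtain ⟨v, hv⟩ : X.Nonempty := Set.nonempty_of_ncard_ne_zero <| by
    intro h0
    rw [h0, Nat.cast_zero] at hX2
    linarith
  have hCX := hX.setOf_reachable_subset hv
  have hC : 0 < {w | H.Reachable v w}.ncard := (Set.ncard_pos).2 ⟨v, Reachable.rfl⟩
  have hcard := Set.ncard_sdiff_add_ncard_of_subset hCX
  have hcardR : ((X \ {w | H.Reachable v w}).ncard : ℝ) + {w | H.Reachable v w}.ncard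
      = X.ncard := by exact_mod_cast hcard
  obtain ⟨Y, hYX, hY⟩ := ih _ (by omega) (hX.sdiff_setOf_reachable v)
    (fun w hw => hsmall w hw.1) (by linarith [hsmall v hv]) rfl
  exact ⟨Y, hYX.trans Set.sdiff_subset, hY⟩

end SimpleGraph

open SimpleGraph

lemma Consistent.agreementGraph_adj {G : SimpleGraph V} {r : V × V → Bool} {B : Finset V}
    (hcons : Consistent G r B) {u v : V} (hu : u ∉ B) (hv : v ∉ B) (h : G.Adj u v) :
    (agreementGraph G r).Adj u v :=
  ⟨h, (hcons u hu v h).mpr hv, (hcons v hv u h.symm).mpr hu⟩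

lemma Consistent.isReachClosed_compl {G : SimpleGraph V} {r : V × V → Bool} {B : Finset V}
    (hcons : Consistent G r B) : (agreementGraph G r).IsReachClosed (↑B)ᶜ := by
  intro v w hvw hv
  rw [reachable_iff_reflTransGen] at hvw
  induction hvw with
  | refl => exact hv
  | tail _ hab ih => exact (hcons _ ih _ hab.1).mp hab.2.1

lemma DeltaConnected.card_pos [Fintype V] {G : SimpleGraph V} {δ : ℝ}
    (hG : DeltaConnected G δ) : 0 < Fintype.card V := by
  by_contra! h
  obtain ⟨a, ha, -⟩ := hG ∅ ∅ (Finset.disjoint_empty_left _) (by simp_all) (by simp_all)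
  simp at ha

end

theorem epsilon_connected_detection_general {V : Type*} [Fintype V]
    (G : SimpleGraph V) (ε : ℝ) (hε0 : 0 < ε)
    (hG : DeltaConnected G ε) (B : Finset V) (r : V × V → Bool)
    (hcons : Consistent G r B)
    (hB : (1 - ε) * (Fintype.card V : ℝ) ≤ (Bᶜ.card : ℝ)) :
    (({v : V | v ∉ B ∧
        ¬ (ε * (Fintype.card V : ℝ) ≤
          (({w | (agreementGraph G r).Reachable v w}.ncard : ℕ) : ℝ))}.ncard : ℕ) : ℝ) <
      ε * (Fintype.card V : ℝ) := by
  set H := agreementGraph G r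
  set n : ℝ := (Fintype.card V : ℝ)
  refine lt_of_not_ge fun hS => ?_
  have hεn : 0 < ε * n := mul_pos hε0 (Nat.cast_pos.2 hG.card_pos)
  have hSclosed : H.IsReachClosed {v | v ∉ B ∧ ¬ ε * n ≤ ({w | H.Reachable v w}.ncard : ℝ)} :=
    fun v w hvw ⟨hvB, hv⟩ =>
      ⟨hcons.isReachClosed_compl hvw hvB, by rwa [← hvw.setOf_reachable_eq]⟩
  obtain ⟨Y, hYS, hY, hYlo, hYhi⟩ :=
    hSclosed.exists_subset_ncard_mem_Ico hεn (fun v hv => not_le.1 hv.2) hS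
  have hYB : Y.toFinset ⊆ Bᶜ := fun y hy => Finset.mem_compl.2 (hYS (Set.mem_toFinset.1 hy)).1
  have hcard : ((Bᶜ \ Y.toFinset).card : ℝ) + Y.ncard = Bᶜ.card := by
    rw [Set.ncard_eq_toFinset_card']
    exact_mod_cast Finset.card_sdiff_add_card_eq_card hYB
  obtain ⟨a, ha, b, hb, hab⟩ := hG Y.toFinset (Bᶜ \ Y.toFinset) Finset.disjoint_sdiff
    (by rwa [← Set.ncard_eq_toFinset_card']) (by linarith)
  rw [Finset.mem_sdiff, Finset.mem_compl, Set.mem_toFinset] at hb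
  rw [Set.mem_toFinset] at ha
  exact hb.2 (hY (hcons.agreementGraph_adj (hYS ha).1 hb.1 hab).reachable ha)

/-- If `G` is ε-connected and at least `(1-ε)n` vertices are truthful,
then fewer than `εn` truthful vertices lie outside `T'`, the union of connected
components of the agreement graph of size at least `εn`. -/
theorem epsilon_connected_detection {V : Type*} [Fintype V]
    (G : SimpleGraph V) (ε : ℝ) (hε0 : 0 < ε) (hε1 : ε < 1 / 3)
    (hG : DeltaConnected G ε) (B : Finset V) (r : V × V → Bool)
    (hcons : Consistent G r B)
    (hB : (1 - ε) * (Fintype.card V : ℝ) ≤ (Bᶜ.card : ℝ)) :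
    (({v : V | v ∉ B ∧
        ¬ (ε * (Fintype.card V : ℝ) ≤
          (({w | (agreementGraph G r).Reachable v w}.ncard : ℕ) : ℝ))}.ncard : ℕ) : ℝ) <
      ε * (Fintype.card V : ℝ) :=
  epsilon_connected_detection_general G ε hε0 hG B r hcons hB
end
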